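/- On the solid torus D × S¹ with coordinates (r,φ,θ), the family of 1-forms a_t = ((1−t)H̃' + C) dθ + C r² dφ, t ∈ [0,1], consists of contact forms for all t, provided C > 0 is large enough relative to the C¹-norm of H̃' and H̃' vanishes near ∂D. In particular, ker a_0 and ker a_1 = ker(C(dθ + r²dφ)) are homotopic through contact structures. -/

import Mathlib

noncomputable section

/-- Coordinates `(x, y, θ)` on the solid torus `D × S¹` (the angle `θ` is a
`2π`-periodic coordinate). -/
abbrev V := Fin 3 → ℝ

/-- Wedge of a 1-form with a 2-form. -/
def w13 (a : V → ℝ) (b : V → V → ℝ) : V → V → V → ℝ :=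
  fun u v w => a u * b v w - a v * b u w + a w * b u v

/-- Exterior derivative of a 1-form. -/
def d1 (ω : V → V → ℝ) : V → V → V → ℝ :=
  fun p u v => fderiv ℝ (fun q => ω q v) p u - fderiv ℝ (fun q => ω q u) p v

def e₀ : V := fun i => if i = 0 then 1 else 0
def e₁ : V := fun i => if i = 1 then 1 else 0
def e₂ : V := fun i => if i = 2 then 1 else 0

/-- The family of 1-forms `a_t = ((1−t) H̃' + C) dθ + C r² dφ`. -/
def aT (H' : V → ℝ) (t C : ℝ) : V → V → ℝ :=
  fun p v => ((1 - t) * H' p + C) * v 2 + C * (p 0 * v 1 - p 1 * v 0)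

lemma fderiv_aT (H' : V → ℝ) (hH : Differentiable ℝ H') (t C : ℝ) (p v u : V) :
    fderiv ℝ (fun q => aT H' t C q v) p u =
      (1 - t) * (fderiv ℝ H' p u) * v 2 + C * (u 0 * v 1 - u 1 * v 0) := by
  have h0 : HasFDerivAt (fun q : V => q 0)
      (ContinuousLinearMap.proj 0 : V →L[ℝ] ℝ) p := hasFDerivAt_apply 0 p
  have h1 : HasFDerivAt (fun q : V => q 1)
      (ContinuousLinearMap.proj 1 : V →L[ℝ] ℝ) p := hasFDerivAt_apply 1 p
  have hh : HasFDerivAt H' (fderiv ℝ H' p) p := (hH p).hasFDerivAt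
  have key := (((hh.const_mul (1 - t)).add_const C).mul_const (v 2)).add
    (((h0.mul_const (v 1)).sub (h1.mul_const (v 0))).const_mul C)
  have : fderiv ℝ (fun q => aT H' t C q v) p =
      (v 2 • ((1 - t) • fderiv ℝ H' p)) +
        C • (v 1 • (ContinuousLinearMap.proj 0 : V →L[ℝ] ℝ) -
          v 0 • (ContinuousLinearMap.proj 1 : V →L[ℝ] ℝ)) := by
    apply HasFDerivAt.fderiv
    exact key
  rw [this]
  simp only [ContinuousLinearMap.add_apply, ContinuousLinearMap.smul_apply,
    ContinuousLinearMap.sub_apply, ContinuousLinearMap.proj_apply, smul_eq_mul]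
  ring

set_option maxHeartbeats 1000000 in
/-- If `H̃'` is smooth, `2π`-periodic in `θ` and vanishes near
`∂D × S¹`, then there is `C₀ > 0` (depending only on the `C¹`-norm of `H̃'`)
such that for every `C > C₀` the forms `a_t` are contact forms on the solid
torus for all `t ∈ [0,1]`; in particular `ker a₀` and
`ker a₁ = ker (C(dθ + r²dφ))` are homotopic through contact structures. -/
theorem stmt4 (H' : V → ℝ) (hH : ContDiff ℝ (⊤ : ℕ∞) H')
    (hper : ∀ p : V, H' (p + fun i => if i = 2 then 2 * Real.pi else 0) = H' p)
    (hbd : ∃ ρ : ℝ, 0 < ρ ∧ ρ < 1 ∧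
      ∀ p : V, ρ ^ 2 ≤ p 0 ^ 2 + p 1 ^ 2 → H' p = 0) :
    ∃ C₀ > 0, ∀ C > C₀, ∀ t ∈ Set.Icc (0 : ℝ) 1, ∀ p : V,
      p 0 ^ 2 + p 1 ^ 2 ≤ 1 →
        0 < w13 (aT H' t C p) (d1 (aT H' t C) p) e₀ e₁ e₂ := by
  classical
  have hdiff : Differentiable ℝ H' := hH.differentiable (by simp)
  set c : V := (fun i => if i = 2 then 2 * Real.pi else 0) with hc
  -- periodicity of H' and of its derivative
  have hper' : ∀ p : V, H' (p + c) = H' p := hper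
  have hfper : ∀ p : V, fderiv ℝ H' (p + c) = fderiv ℝ H' p := by
    intro p
    have hcomp : (fun x : V => H' (x + c)) = H' := funext hper'
    have h2 : HasFDerivAt (fun x : V => H' (x + c)) (fderiv ℝ H' (p + c)) p := by
      have := (hdiff (p + c)).hasFDerivAt
      have hid : HasFDerivAt (fun x : V => x + c)
          (ContinuousLinearMap.id ℝ V) p := (hasFDerivAt_id p).add_const c
      have h3 := this.comp p hid
      simp only [ContinuousLinearMap.comp_id] at h3
      exact h3
    rw [hcomp] at h2
    exact h2.fderiv.symm
  -- the C¹-size function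
  set g : V → ℝ := fun p => |H' p| + ‖fderiv ℝ H' p‖ with hg
  have hgnonneg : ∀ p, 0 ≤ g p := fun p => add_nonneg (abs_nonneg _) (norm_nonneg _)
  have hstep : ∀ p : V, g (p + c) = g p := by
    intro p; simp only [hg, hper' p, hfper p]
  have hgper : ∀ (n : ℤ) (p : V), g (p + n • c) = g p := by
    intro n
    induction n using Int.induction_on with
    | zero => intro p; simp
    | succ k ih =>
        intro p
        have h1 : p + ((k : ℤ) + 1) • c = (p + (k : ℤ) • c) + c := by
          rw [add_smul, one_smul]; abel
        rw [h1, hstep, ih]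
    | pred k ih =>
        intro p
        have h1 : p + (-(k : ℤ) - 1) • c + c = p + (-(k : ℤ)) • c := by
          rw [sub_smul, one_smul]; abel
        calc g (p + (-(k : ℤ) - 1) • c) = g (p + (-(k : ℤ) - 1) • c + c) :=
              (hstep _).symm
          _ = g (p + (-(k : ℤ)) • c) := by rw [h1]
          _ = g p := ih p
  -- compact fundamental domain
  set l : V := (fun i => if i = 2 then 0 else -1) with hl
  set u : V := (fun i => if i = 2 then 2 * Real.pi else 1) with hu
  have hKcompact : IsCompact (Set.Icc l u) := isCompact_Icc
  have hgcont : Continuous g :=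
    (hH.continuous.abs).add ((hH.continuous_fderiv (by simp)).norm)
  set M : ℝ := sSup (g '' Set.Icc l u) with hM
  have hlu : l ≤ u := by
    intro i; simp only [hl, hu]
    split <;> [positivity; norm_num]
  have hKne : (Set.Icc l u).Nonempty := Set.nonempty_Icc.mpr hlu
  have hbdd : BddAbove (g '' Set.Icc l u) := (hKcompact.image hgcont).bddAbove
  have hMle : ∀ p ∈ Set.Icc l u, g p ≤ M := fun p hp => le_csSup hbdd ⟨p, hp, rfl⟩
  have hM0 : 0 ≤ M := le_trans (hgnonneg hKne.choose) (hMle _ hKne.choose_spec)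
  -- bound g on the whole solid torus
  have hgbound : ∀ p : V, p 0 ^ 2 + p 1 ^ 2 ≤ 1 → g p ≤ M := by
    intro p hp
    have twopi : (0 : ℝ) < 2 * Real.pi := by positivity
    set n : ℤ := -⌊p 2 / (2 * Real.pi)⌋ with hn
    set q : V := p + n • c with hq'
    have hq := hgper n p
    have hqi : ∀ i, q i = p i + (n : ℝ) * c i := by
      intro i
      simp [hq', Pi.add_apply, Pi.smul_apply, zsmul_eq_mul]
    have hc2 : c 2 = 2 * Real.pi := by simp [hc]
    have hc0 : c 0 = 0 := by simp [hc]
    have hc1 : c 1 = 0 := by simp [hc]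
    have hq0 : q 0 = p 0 := by rw [hqi 0, hc0]; ring
    have hq1 : q 1 = p 1 := by rw [hqi 1, hc1]; ring
    have hq2 : q 2 = p 2 - (⌊p 2 / (2 * Real.pi)⌋ : ℝ) * (2 * Real.pi) := by
      rw [hqi 2, hc2, hn]; push_cast; ring
    have hq2a : 0 ≤ q 2 := by
      rw [hq2]; exact Int.sub_floor_div_mul_nonneg _ twopi
    have hq2b : q 2 ≤ 2 * Real.pi := by
      rw [hq2]; exact (Int.sub_floor_div_mul_lt _ twopi).le
    have hp0 : |p 0| ≤ 1 := by
      nlinarith [sq_nonneg (p 0), sq_nonneg (p 1), abs_nonneg (p 0), sq_abs (p 0)]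
    have hp1 : |p 1| ≤ 1 := by
      nlinarith [sq_nonneg (p 0), sq_nonneg (p 1), abs_nonneg (p 1), sq_abs (p 1)]
    have habs0 := abs_le.mp hp0
    have habs1 := abs_le.mp hp1
    have hqK : q ∈ Set.Icc l u := by
      constructor <;> intro i <;> fin_cases i
      · show l 0 ≤ q 0
        rw [hq0]; simpa [hl] using habs0.1
      · show l 1 ≤ q 1
        rw [hq1]; simpa [hl] using habs1.1
      · show l 2 ≤ q 2
        simpa [hl] using hq2a
      · show q 0 ≤ u 0
        rw [hq0]; simpa [hu] using habs0.2
      · show q 1 ≤ u 1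
        rw [hq1]; simpa [hu] using habs1.2
      · show q 2 ≤ u 2
        simpa [hu] using hq2b
    calc g p = g q := hq.symm
      _ ≤ M := hMle q hqK
  refine ⟨M + 1, by positivity, ?_⟩
  intro C hC t ht p hp
  have hCpos : 0 < C := lt_trans (by positivity) hC
  set D0 : ℝ := fderiv ℝ H' p e₀ with hD0
  set D1 : ℝ := fderiv ℝ H' p e₁ with hD1
  have hw : w13 (aT H' t C p) (d1 (aT H' t C) p) e₀ e₁ e₂ =
      C * (2 * C + 2 * (1 - t) * H' p - (1 - t) * (p 0 * D0 + p 1 * D1)) := by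
    simp only [w13, d1, fderiv_aT H' hdiff t C p]
    have f1 : (2:Fin 3) ≠ 0 := by decide
    have f2 : (2:Fin 3) ≠ 1 := by decide
    have f3 : (1:Fin 3) ≠ 0 := by decide
    have f4 : (1:Fin 3) ≠ 2 := by decide
    have f5 : (0:Fin 3) ≠ 1 := by decide
    have f6 : (0:Fin 3) ≠ 2 := by decide
    simp only [aT, e₀, e₁, e₂, hD0, hD1, f1, f2, f3, f4, f5, f6,
      if_neg, if_pos, ite_true, ite_false, if_true, if_false]
    norm_num
    ring
  rw [hw]
  apply mul_pos hCpos
  -- norm bounds on e₀, e₁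
  have hnorm : ∀ (v : V), (∀ i, |v i| ≤ 1) → ‖v‖ ≤ 1 := by
    intro v hv
    rw [pi_norm_le_iff_of_nonneg (by norm_num)]
    intro i; rw [Real.norm_eq_abs]; exact hv i
  have he₀n : ‖e₀‖ ≤ 1 := by
    apply hnorm; intro i; simp only [e₀]; split <;> simp
  have he₁n : ‖e₁‖ ≤ 1 := by
    apply hnorm; intro i; simp only [e₁]; split <;> simp
  have hD0b : |D0| ≤ ‖fderiv ℝ H' p‖ := by
    calc |D0| ≤ ‖fderiv ℝ H' p‖ * ‖e₀‖ := (fderiv ℝ H' p).le_opNorm e₀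
      _ ≤ ‖fderiv ℝ H' p‖ * 1 := mul_le_mul_of_nonneg_left he₀n (norm_nonneg _)
      _ = ‖fderiv ℝ H' p‖ := mul_one _
  have hD1b : |D1| ≤ ‖fderiv ℝ H' p‖ := by
    calc |D1| ≤ ‖fderiv ℝ H' p‖ * ‖e₁‖ := (fderiv ℝ H' p).le_opNorm e₁
      _ ≤ ‖fderiv ℝ H' p‖ * 1 := mul_le_mul_of_nonneg_left he₁n (norm_nonneg _)
      _ = ‖fderiv ℝ H' p‖ := mul_one _
  have hgp : |H' p| + ‖fderiv ℝ H' p‖ ≤ M := hgbound p hp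
  have hp0 : |p 0| ≤ 1 := by
    nlinarith [sq_nonneg (p 0), sq_nonneg (p 1), abs_nonneg (p 0), sq_abs (p 0)]
  have hp1 : |p 1| ≤ 1 := by
    nlinarith [sq_nonneg (p 0), sq_nonneg (p 1), abs_nonneg (p 1), sq_abs (p 1)]
  obtain ⟨ht0, ht1⟩ := ht
  have hT : 0 ≤ 1 - t := by linarith
  have hT1 : 1 - t ≤ 1 := by linarith
  have habs : |2 * (1 - t) * H' p - (1 - t) * (p 0 * D0 + p 1 * D1)| ≤ 2 * M := by
    have h1 : |p 0 * D0| ≤ |D0| := by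
      rw [abs_mul]
      calc |p 0| * |D0| ≤ 1 * |D0| := mul_le_mul_of_nonneg_right hp0 (abs_nonneg _)
        _ = |D0| := one_mul _
    have h2 : |p 1 * D1| ≤ |D1| := by
      rw [abs_mul]
      calc |p 1| * |D1| ≤ 1 * |D1| := mul_le_mul_of_nonneg_right hp1 (abs_nonneg _)
        _ = |D1| := one_mul _
    have hTabs : |1 - t| = 1 - t := abs_of_nonneg hT
    calc |2 * (1 - t) * H' p - (1 - t) * (p 0 * D0 + p 1 * D1)|
        ≤ |2 * (1 - t) * H' p| + |(1 - t) * (p 0 * D0 + p 1 * D1)| := abs_sub _ _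
      _ = 2 * (1 - t) * |H' p| + (1 - t) * |p 0 * D0 + p 1 * D1| := by
          rw [abs_mul, abs_mul, abs_mul, hTabs]
          simp [abs_of_nonneg, mul_assoc]
      _ ≤ 2 * 1 * |H' p| + 1 * (|p 0 * D0| + |p 1 * D1|) := by
          have h3 := abs_add_le (p 0 * D0) (p 1 * D1)
          nlinarith [abs_nonneg (H' p), abs_nonneg (p 0 * D0 + p 1 * D1),
            abs_nonneg (p 0 * D0), abs_nonneg (p 1 * D1)]
      _ ≤ 2 * |H' p| + (|D0| + |D1|) := by nlinarith
      _ ≤ 2 * |H' p| + 2 * ‖fderiv ℝ H' p‖ := by linarith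
      _ ≤ 2 * M := by linarith
  have hneg := neg_abs_le (2 * (1 - t) * H' p - (1 - t) * (p 0 * D0 + p 1 * D1))
  linarith [habs, hneg]
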